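/- arXiv:2404.07402 — 4 statements merged into one kernel-verified Lean document; each statement's English description precedes it below -/
import Mathlib

section
/- Let n ≥ 1. Let ρ_xy : ℝⁿ×ℝⁿ → [0,∞) and ρ_xzt : ℝⁿ×ℝⁿ×[0,1] → [0,∞) be integrable (with respect to Lebesgue measure), ρ₀ : ℝⁿ → [0,∞) integrable, and Q : ℝⁿ×[0,1] → [0,∞) measurable. Suppose there exist measurable f : ℝⁿ → [0,∞) and Λ : ℝⁿ×[0,1] → [0,∞) such that the couplings π*_xy(x,y) := ρ_xy(x,y) f(x) and π*_xzt(x,z,t) := ρ_xzt(x,z,t) f(x) Λ(z,t) satisfy the constraints ∫_{ℝⁿ} π*_xy(x,y) dy + ∫_0^1 ∫_{ℝⁿ} π*_xzt(x,z,t) dz dt = ρ₀(x) for a.e. x, and ∫_{ℝⁿ} π*_xzt(x,z,t) dx = Q(z,t) for a.e. (z,t), and suppose that D(π*_xy‖ρ_xy) + D(π*_xzt‖ρ_xzt) < ∞, ∫_{ℝⁿ} ρ₀(x) |log f(x)| dx < ∞, and ∫_0^1 ∫_{ℝⁿ} Q(z,t) |log Λ(z,t)| dz dt < ∞. Then for every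 pair of nonnegative measurable functions π_xy on ℝⁿ×ℝⁿ and π_xzt on ℝⁿ×ℝⁿ×[0,1] satisfying the same two constraints, vanishing a.e. on the sets where ρ_xy respectively ρ_xzt vanish, one has D(π_xy‖ρ_xy) + D(π_xzt‖ρ_xzt) ≥ D(π*_xy‖ρ_xy) + D(π*_xzt‖ρ_xzt). -/
/-!
Put `u = log f` and `v = log Λ`. Where `f` (resp. `Λ`) vanishes, the constraints met by the optimal
couplings force `ρ₀` (resp. `Q`) to vanish, so no feasible coupling puts mass there. On the rest of
the support of a feasible `σ`, `π*/ρ` equals `exp (u x)` resp. `exp (u x + v (z, t))`, and the Gibbs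
inequality `a log (a / c) - a h ≥ a - b` (valid when `b / c = exp h`) bounds `σ log (σ / ρ)` below
by `σ h + σ - π*`. Integrating, the mass terms cancel since all couplings have total mass `∫ ρ₀`,
and the marginal constraints turn the potential terms into `∫ ρ₀ u + ∫ Q v`, which is also the
value of `D(π*_xy‖ρ_xy) + D(π*_xzt‖ρ_xzt)`.
-/

open MeasureTheory

/-- Relative entropy `D(p‖q) = ∫ p log(p/q) dm` between nonnegative densities
(with the convention `0 log(0/0) = 0`, which holds in Lean since `Real.log 0 = 0`
and `0/0 = 0`). -/
noncomputable def dEnt {E : Type*} [MeasurableSpace E] (m : Measure E) (p q : E → ℝ) : ℝ :=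
  ∫ x, p x * Real.log (p x / q x) ∂m

open Real Filter

theorem sub_le_mul_log_div {a b : ℝ} (ha : 0 ≤ a) (hb : 0 ≤ b) (hab : b = 0 → a = 0) :
    a - b ≤ a * log (a / b) := by
  rcases ha.eq_or_lt with rfl | ha
  · simpa using hb
  have hb : 0 < b := hb.lt_of_ne' fun h => ha.ne' (hab h)
  calc a - b = a * (1 - (a / b)⁻¹) := by field_simp
    _ ≤ a * log (a / b) := by gcongr; exact one_sub_inv_le_log_of_pos (by positivity)

theorem sub_le_mul_log_div_sub_mul {a b c h : ℝ} (ha : 0 ≤ a) (hb : 0 ≤ b)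
    (hbc : a ≠ 0 → b / c = exp h) : a - b ≤ a * log (a / c) - a * h := by
  rcases eq_or_ne a 0 with rfl | ha'
  · simpa using hb
  have hbc := hbc ha'
  have hb' : b ≠ 0 := by rintro rfl; simp [(exp_pos h).ne] at hbc
  have hc' : c ≠ 0 := by rintro rfl; simp [(exp_pos h).ne] at hbc
  have hlog : log (a / c) - h = log (a / b) := by
    rw [← log_exp h, ← hbc, ← log_div (div_ne_zero ha' hc') (div_ne_zero hb' hc')]
    field_simp
  calc a - b ≤ a * log (a / b) := sub_le_mul_log_div ha hb fun h => absurd h hb'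
    _ = a * log (a / c) - a * h := by rw [← hlog]; ring

section

variable {E : Type*} [MeasurableSpace E] {m : Measure E}

theorem integrable_of_integrable_mul_log_div {p q : E → ℝ} (hp : AEStronglyMeasurable p m)
    (hp0 : 0 ≤ p) (hq0 : 0 ≤ q) (hq : Integrable q m) (hpq : ∀ᵐ x ∂m, q x = 0 → p x = 0)
    (hent : Integrable (fun x => p x * log (p x / q x)) m) : Integrable p m := by
  refine (hent.add hq).mono' hp ?_
  filter_upwards [hpq] with x hx
  rw [Pi.add_apply, norm_of_nonneg (hp0 x)]
  linarith [sub_le_mul_log_div (hp0 x) (hq0 x) hx]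

theorem integrable_of_eq_mul {τ ρ g : E → ℝ} (hρ : Integrable ρ m) (hρ0 : 0 ≤ ρ)
    (hg : AEStronglyMeasurable g m) (hg0 : 0 ≤ g) (hτ : ∀ x, τ x = ρ x * g x)
    (hent : Integrable (fun x => τ x * log (τ x / ρ x)) m) : Integrable τ m :=
  integrable_of_integrable_mul_log_div ((hρ.1.mul hg).congr (.of_forall fun x => (hτ x).symm))
    (fun x => hτ x ▸ mul_nonneg (hρ0 x) (hg0 x)) hρ0 hρ
    (.of_forall fun x hx => by rw [hτ, hx, zero_mul]) hent

theorem integral_sub_integral_le_dEnt_sub {σ τ ρ h : E → ℝ} (hσ0 : 0 ≤ σ) (hτ0 : 0 ≤ τ)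
    (hσ : Integrable σ m) (hτ : Integrable τ m)
    (hent : Integrable (fun p => σ p * log (σ p / ρ p)) m)
    (hh : Integrable (fun p => σ p * h p) m) (hsupp : ∀ᵐ p ∂m, σ p ≠ 0 → τ p / ρ p = exp (h p)) :
    ∫ p, σ p ∂m - ∫ p, τ p ∂m ≤ dEnt m σ ρ - ∫ p, σ p * h p ∂m := by
  rw [dEnt, ← integral_sub hσ hτ, ← integral_sub hent hh]
  refine integral_mono_ae (hσ.sub hτ) (hent.sub hh) ?_
  filter_upwards [hsupp] with p hp
  exact sub_le_mul_log_div_sub_mul (hσ0 p) (hτ0 p) hp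

theorem dEnt_eq_integral_mul {τ ρ h : E → ℝ}
    (hτ : ∀ᵐ p ∂m, τ p ≠ 0 → τ p / ρ p = exp (h p)) :
    dEnt m τ ρ = ∫ p, τ p * h p ∂m := by
  refine integral_congr_ae ?_
  filter_upwards [hτ] with p hp
  rcases eq_or_ne (τ p) 0 with h0 | h0
  · simp [h0]
  · simp [hp h0]

end

section Prod

variable {X Y : Type*} [MeasurableSpace X] [MeasurableSpace Y] {μ : Measure X} {ν : Measure Y}
  [SFinite μ] [SFinite ν]

theorem integral_mul_comp_fst {F : X × Y → ℝ} {g : X → ℝ}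
    (hFg : Integrable (fun p => F p * g p.1) (μ.prod ν)) :
    ∫ p, F p * g p.1 ∂(μ.prod ν) = ∫ x, (∫ y, F (x, y) ∂ν) * g x ∂μ := by
  simp_rw [integral_prod _ hFg, integral_mul_const]

theorem integral_mul_comp_snd {F : X × Y → ℝ} {g : Y → ℝ}
    (hFg : Integrable (fun p => F p * g p.2) (μ.prod ν)) :
    ∫ p, F p * g p.2 ∂(μ.prod ν) = ∫ y, (∫ x, F (x, y) ∂μ) * g y ∂ν := by
  simp_rw [integral_prod_symm _ hFg, integral_mul_const]

theorem integrable_mul_comp_fst_of_integral_le {F : X × Y → ℝ} {g ρ : X → ℝ}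
    (hF : Integrable F (μ.prod ν)) (hF0 : 0 ≤ F) (hg : AEStronglyMeasurable g μ)
    (hle : ∀ᵐ x ∂μ, ∫ y, F (x, y) ∂ν ≤ ρ x) (hρg : Integrable (fun x => ρ x * |g x|) μ) :
    Integrable (fun p => F p * g p.1) (μ.prod ν) := by
  have hm : AEStronglyMeasurable (fun p => F p * g p.1) (μ.prod ν) := hF.1.mul hg.comp_fst
  refine (integrable_prod_iff hm).2 ⟨?_, hρg.mono' hm.norm.integral_prod_right' ?_⟩
  · filter_upwards [hF.prod_right_ae] with x hx using hx.mul_const _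
  · filter_upwards [hle] with x hx
    simp_rw [norm_mul, integral_mul_const, norm_of_nonneg (hF0 _)]
    have : 0 ≤ ∫ y, F (x, y) ∂ν := integral_nonneg fun y => hF0 _
    rw [norm_of_nonneg (by positivity), Real.norm_eq_abs]
    exact mul_le_mul_of_nonneg_right hx (abs_nonneg _)

theorem integrable_mul_comp_snd_of_integral_le {F : X × Y → ℝ} {g ρ : Y → ℝ}
    (hF : Integrable F (μ.prod ν)) (hF0 : 0 ≤ F) (hg : AEStronglyMeasurable g ν)
    (hle : ∀ᵐ y ∂ν, ∫ x, F (x, y) ∂μ ≤ ρ y) (hρg : Integrable (fun y => ρ y * |g y|) ν) :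
    Integrable (fun p => F p * g p.2) (μ.prod ν) :=
  (integrable_mul_comp_fst_of_integral_le hF.swap (fun _ => hF0 _) hg hle hρg).swap

theorem ae_prod_eq_zero_of_integral_eq_zero {F : X × Y → ℝ} {s : Set X} (hs : MeasurableSet s)
    (hF : Measurable F) (hF0 : 0 ≤ F) (hFi : Integrable F (μ.prod ν))
    (h : ∀ᵐ x ∂μ, x ∈ s → ∫ y, F (x, y) ∂ν = 0) :
    ∀ᵐ p ∂(μ.prod ν), p.1 ∈ s → F p = 0 := by
  have hmeas : MeasurableSet {p : X × Y | p.1 ∈ s → F p = 0} :=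
    (measurable_fst hs).imp (hF (measurableSet_singleton 0))
  rw [Measure.ae_prod_iff_ae_ae hmeas]
  filter_upwards [h, hFi.prod_right_ae] with x hx hix
  by_cases hxs : x ∈ s
  · have hslice := (integral_eq_zero_iff_of_nonneg (fun y => hF0 (x, y)) hix).1 (hx hxs)
    filter_upwards [hslice] with y hy using fun _ => hy
  · exact .of_forall fun y hy => absurd hy hxs

theorem ae_prod_eq_zero_of_integral_eq_zero' {F : X × Y → ℝ} {t : Set Y} (ht : MeasurableSet t)
    (hF : Measurable F) (hF0 : 0 ≤ F) (hFi : Integrable F (μ.prod ν))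
    (h : ∀ᵐ y ∂ν, y ∈ t → ∫ x, F (x, y) ∂μ = 0) :
    ∀ᵐ p ∂(μ.prod ν), p.2 ∈ t → F p = 0 :=
  Measure.measurePreserving_swap.quasiMeasurePreserving.ae
    (ae_prod_eq_zero_of_integral_eq_zero ht (hF.comp measurable_swap) (fun _ => hF0 _) hFi.swap h)

theorem MeasureTheory.Measure.restrict_setOf_snd_mem (t : Set Y) :
    (μ.prod ν).restrict {p | p.2 ∈ t} = μ.prod (ν.restrict t) := by
  rw [← Measure.restrict_univ (μ := μ), Measure.prod_restrict, Measure.restrict_univ,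
    Set.univ_prod]
  rfl

end Prod

section Couplings

variable {X Y Z : Type*} [MeasurableSpace X] [MeasurableSpace Y] [MeasurableSpace Z]

/-- `Z` is the space of killing events `(z, t)`: `πxz` couples initial positions with killing
events and `πxy` couples them with the positions of the surviving mass. -/
structure IsCoupling (μ : Measure X) (ν : Measure Y) (κ : Measure Z) (ρ₀ : X → ℝ) (Q : Z → ℝ)
    (πxy : X × Y → ℝ) (πxz : X × Z → ℝ) : Prop where
  marginal_fst : ∀ᵐ x ∂μ, (∫ y, πxy (x, y) ∂ν) + ∫ z, πxz (x, z) ∂κ = ρ₀ x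
  marginal_snd : ∀ᵐ z ∂κ, ∫ x, πxz (x, z) ∂μ = Q z

variable {μ : Measure X} {ν : Measure Y} {κ : Measure Z} {ρ₀ : X → ℝ} {Q : Z → ℝ}

namespace IsCoupling

variable {σxy : X × Y → ℝ} {σxz : X × Z → ℝ}

theorem ae_integral_le (hσ : IsCoupling μ ν κ ρ₀ Q σxy σxz) (hσxy0 : 0 ≤ σxy) (hσxz0 : 0 ≤ σxz) :
    ∀ᵐ x ∂μ, 0 ≤ ∫ y, σxy (x, y) ∂ν ∧ ∫ y, σxy (x, y) ∂ν ≤ ρ₀ x ∧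
      0 ≤ ∫ z, σxz (x, z) ∂κ ∧ ∫ z, σxz (x, z) ∂κ ≤ ρ₀ x := by
  filter_upwards [hσ.marginal_fst] with x hx
  have := integral_nonneg (μ := ν) fun y => hσxy0 (x, y)
  have := integral_nonneg (μ := κ) fun z => hσxz0 (x, z)
  refine ⟨?_, ?_, ?_, ?_⟩ <;> linarith

theorem ae_snd_eq_zero [SFinite μ] [SFinite κ] (hσ : IsCoupling μ ν κ ρ₀ Q σxy σxz)
    (hσxz_meas : Measurable σxz) (hσxz0 : 0 ≤ σxz) (hσxz : Integrable σxz (μ.prod κ))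
    {t : Set Z} (ht : MeasurableSet t)
    (hQ : ∀ᵐ z ∂κ, z ∈ t → Q z = 0) : ∀ᵐ p ∂(μ.prod κ), p.2 ∈ t → σxz p = 0 :=
  ae_prod_eq_zero_of_integral_eq_zero' ht hσxz_meas hσxz0 hσxz
    (by filter_upwards [hQ, hσ.marginal_snd] with z h0 h hz using h.trans (h0 hz))

end IsCoupling

variable [SFinite μ] [SFinite ν] [SFinite κ]

namespace IsCoupling

variable {σxy : X × Y → ℝ} {σxz : X × Z → ℝ}

theorem ae_fst_eq_zero (hσ : IsCoupling μ ν κ ρ₀ Q σxy σxz) (hσxy_meas : Measurable σxy)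
    (hσxz_meas : Measurable σxz) (hσxy0 : 0 ≤ σxy) (hσxz0 : 0 ≤ σxz)
    (hσxy : Integrable σxy (μ.prod ν)) (hσxz : Integrable σxz (μ.prod κ)) {s : Set X}
    (hs : MeasurableSet s) (hρ₀ : ∀ᵐ x ∂μ, x ∈ s → ρ₀ x = 0) :
    (∀ᵐ p ∂(μ.prod ν), p.1 ∈ s → σxy p = 0) ∧ ∀ᵐ p ∂(μ.prod κ), p.1 ∈ s → σxz p = 0 := by
  have hle := hσ.ae_integral_le hσxy0 hσxz0
  refine ⟨ae_prod_eq_zero_of_integral_eq_zero hs hσxy_meas hσxy0 hσxy ?_,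
    ae_prod_eq_zero_of_integral_eq_zero hs hσxz_meas hσxz0 hσxz ?_⟩ <;>
  · filter_upwards [hρ₀, hle] with x h0 h hx
    linarith [h0 hx]

theorem integral_add_integral (hσ : IsCoupling μ ν κ ρ₀ Q σxy σxz)
    (hσxy : Integrable σxy (μ.prod ν)) (hσxz : Integrable σxz (μ.prod κ)) :
    ∫ p, σxy p ∂(μ.prod ν) + ∫ p, σxz p ∂(μ.prod κ) = ∫ x, ρ₀ x ∂μ := by
  rw [integral_prod _ hσxy, integral_prod _ hσxz,
    ← integral_add hσxy.integral_prod_left hσxz.integral_prod_left]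
  exact integral_congr_ae hσ.marginal_fst

theorem integrable_mul_potential (hσ : IsCoupling μ ν κ ρ₀ Q σxy σxz) (hσxy0 : 0 ≤ σxy)
    (hσxz0 : 0 ≤ σxz) (hσxy : Integrable σxy (μ.prod ν)) (hσxz : Integrable σxz (μ.prod κ))
    {u : X → ℝ} {v : Z → ℝ} (hu : AEStronglyMeasurable u μ) (hv : AEStronglyMeasurable v κ)
    (hρ₀u : Integrable (fun x => ρ₀ x * |u x|) μ) (hQv : Integrable (fun z => Q z * |v z|) κ) :
    Integrable (fun p => σxy p * u p.1) (μ.prod ν) ∧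
      Integrable (fun p => σxz p * u p.1) (μ.prod κ) ∧
      Integrable (fun p => σxz p * v p.2) (μ.prod κ) := by
  have hle := hσ.ae_integral_le hσxy0 hσxz0
  exact ⟨integrable_mul_comp_fst_of_integral_le hσxy hσxy0 hu (hle.mono fun _ h => h.2.1) hρ₀u,
    integrable_mul_comp_fst_of_integral_le hσxz hσxz0 hu (hle.mono fun _ h => h.2.2.2) hρ₀u,
    integrable_mul_comp_snd_of_integral_le hσxz hσxz0 hv (hσ.marginal_snd.mono fun _ h => h.le)
      hQv⟩

theorem integral_mul_potential (hσ : IsCoupling μ ν κ ρ₀ Q σxy σxz) {u : X → ℝ} {v : Z → ℝ}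
    (hσxyu : Integrable (fun p => σxy p * u p.1) (μ.prod ν))
    (hσxzu : Integrable (fun p => σxz p * u p.1) (μ.prod κ))
    (hσxzv : Integrable (fun p => σxz p * v p.2) (μ.prod κ)) :
    ∫ p, σxy p * u p.1 ∂(μ.prod ν) + ∫ p, σxz p * (u p.1 + v p.2) ∂(μ.prod κ) =
      ∫ x, ρ₀ x * u x ∂μ + ∫ z, Q z * v z ∂κ := by
  have hxyu := hσxyu.integral_prod_left
  have hxzu := hσxzu.integral_prod_left
  simp_rw [integral_mul_const] at hxyu hxzu
  simp_rw [mul_add]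
  rw [integral_add hσxzu hσxzv, ← add_assoc, integral_mul_comp_fst hσxyu,
    integral_mul_comp_fst hσxzu, integral_mul_comp_snd hσxzv, ← integral_add hxyu hxzu]
  congr 1
  · refine integral_congr_ae ?_
    filter_upwards [hσ.marginal_fst] with x hx
    rw [← add_mul, hx]
  · refine integral_congr_ae ?_
    filter_upwards [hσ.marginal_snd] with z hz
    rw [hz]

end IsCoupling

theorem dEnt_add_dEnt_le_of_div_eq_exp {ρxy σxy πxy : X × Y → ℝ} {ρxz σxz πxz : X × Z → ℝ}
    {u : X → ℝ} {v : Z → ℝ}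
    (hσ : IsCoupling μ ν κ ρ₀ Q σxy σxz) (hπ : IsCoupling μ ν κ ρ₀ Q πxy πxz)
    (hσxy0 : 0 ≤ σxy) (hσxz0 : 0 ≤ σxz) (hπxy0 : 0 ≤ πxy) (hπxz0 : 0 ≤ πxz)
    (hσxy : Integrable σxy (μ.prod ν)) (hσxz : Integrable σxz (μ.prod κ))
    (hπxy : Integrable πxy (μ.prod ν)) (hπxz : Integrable πxz (μ.prod κ))
    (hu : AEStronglyMeasurable u μ) (hv : AEStronglyMeasurable v κ)
    (hρ₀u : Integrable (fun x => ρ₀ x * |u x|) μ) (hQv : Integrable (fun z => Q z * |v z|) κ)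
    (hσxy_ent : Integrable (fun p => σxy p * log (σxy p / ρxy p)) (μ.prod ν))
    (hσxz_ent : Integrable (fun p => σxz p * log (σxz p / ρxz p)) (μ.prod κ))
    (hσxy_supp : ∀ᵐ p ∂(μ.prod ν), σxy p ≠ 0 → πxy p / ρxy p = exp (u p.1))
    (hσxz_supp : ∀ᵐ p ∂(μ.prod κ), σxz p ≠ 0 → πxz p / ρxz p = exp (u p.1 + v p.2))
    (hπxy_supp : ∀ᵐ p ∂(μ.prod ν), πxy p ≠ 0 → πxy p / ρxy p = exp (u p.1))
    (hπxz_supp : ∀ᵐ p ∂(μ.prod κ), πxz p ≠ 0 → πxz p / ρxz p = exp (u p.1 + v p.2)) :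
    dEnt (μ.prod ν) πxy ρxy + dEnt (μ.prod κ) πxz ρxz ≤
      dEnt (μ.prod ν) σxy ρxy + dEnt (μ.prod κ) σxz ρxz := by
  obtain ⟨hσxyu, hσxzu, hσxzv⟩ :=
    hσ.integrable_mul_potential hσxy0 hσxz0 hσxy hσxz hu hv hρ₀u hQv
  obtain ⟨hπxyu, hπxzu, hπxzv⟩ :=
    hπ.integrable_mul_potential hπxy0 hπxz0 hπxy hπxz hu hv hρ₀u hQv
  have hσxzuv : Integrable (fun p => σxz p * (u p.1 + v p.2)) (μ.prod κ) :=
    (hσxzu.add hσxzv).congr (.of_forall fun p => (mul_add _ _ _).symm)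
  have hgibbs_xy := integral_sub_integral_le_dEnt_sub hσxy0 hπxy0 hσxy hπxy hσxy_ent hσxyu hσxy_supp
  have hgibbs_xz :=
    integral_sub_integral_le_dEnt_sub hσxz0 hπxz0 hσxz hπxz hσxz_ent hσxzuv hσxz_supp
  have hσ_pot := hσ.integral_mul_potential hσxyu hσxzu hσxzv
  have hσ_mass := hσ.integral_add_integral hσxy hσxz
  have hπ_mass := hπ.integral_add_integral hπxy hπxz
  rw [dEnt_eq_integral_mul hπxy_supp, dEnt_eq_integral_mul hπxz_supp,
    hπ.integral_mul_potential hπxyu hπxzu hπxzv]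
  linarith

theorem dEnt_add_dEnt_le_of_eq_mul {ρxy σxy πxy : X × Y → ℝ} {ρxz σxz πxz : X × Z → ℝ}
    {f : X → ℝ} {Λ : Z → ℝ}
    (hσ : IsCoupling μ ν κ ρ₀ Q σxy σxz) (hπ : IsCoupling μ ν κ ρ₀ Q πxy πxz)
    (hρxy0 : 0 ≤ ρxy) (hρxz0 : 0 ≤ ρxz) (hf : Measurable f) (hf0 : 0 ≤ f)
    (hΛ : Measurable Λ) (hΛ0 : 0 ≤ Λ)
    (hπxy_eq : ∀ p, πxy p = ρxy p * f p.1) (hπxz_eq : ∀ p, πxz p = ρxz p * f p.1 * Λ p.2)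
    (hπxy : Integrable πxy (μ.prod ν)) (hπxz : Integrable πxz (μ.prod κ))
    (hρ₀f : Integrable (fun x => ρ₀ x * |log (f x)|) μ)
    (hQΛ : Integrable (fun z => Q z * |log (Λ z)|) κ)
    (hσxy_meas : Measurable σxy) (hσxz_meas : Measurable σxz) (hσxy0 : 0 ≤ σxy) (hσxz0 : 0 ≤ σxz)
    (hσxy : Integrable σxy (μ.prod ν)) (hσxz : Integrable σxz (μ.prod κ))
    (hσxy_ρ : ∀ᵐ p ∂(μ.prod ν), ρxy p = 0 → σxy p = 0)
    (hσxz_ρ : ∀ᵐ p ∂(μ.prod κ), ρxz p = 0 → σxz p = 0)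
    (hσxy_ent : Integrable (fun p => σxy p * log (σxy p / ρxy p)) (μ.prod ν))
    (hσxz_ent : Integrable (fun p => σxz p * log (σxz p / ρxz p)) (μ.prod κ)) :
    dEnt (μ.prod ν) πxy ρxy + dEnt (μ.prod κ) πxz ρxz ≤
      dEnt (μ.prod ν) σxy ρxy + dEnt (μ.prod κ) σxz ρxz := by
  have hf_supp : ∀ᵐ x ∂μ, f x = 0 → ρ₀ x = 0 := by
    filter_upwards [hπ.marginal_fst] with x hx hfx
    simp [← hx, hπxy_eq, hπxz_eq, hfx]
  have hΛ_supp : ∀ᵐ z ∂κ, Λ z = 0 → Q z = 0 := by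
    filter_upwards [hπ.marginal_snd] with z hz hΛz
    simp [← hz, hπxz_eq, hΛz]
  obtain ⟨hσxy_f, hσxz_f⟩ := hσ.ae_fst_eq_zero hσxy_meas hσxz_meas hσxy0 hσxz0 hσxy hσxz
    (hf (measurableSet_singleton 0)) hf_supp
  have hσxz_Λ := hσ.ae_snd_eq_zero hσxz_meas hσxz0 hσxz (hΛ (measurableSet_singleton 0)) hΛ_supp
  have hπxy_div : ∀ p, ρxy p * f p.1 ≠ 0 → πxy p / ρxy p = exp (log (f p.1)) := by
    intro p hp
    rw [hπxy_eq, mul_div_cancel_left₀ _ (left_ne_zero_of_mul hp),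
      exp_log ((hf0 _).lt_of_ne' (right_ne_zero_of_mul hp))]
  have hπxz_div : ∀ p, ρxz p * f p.1 * Λ p.2 ≠ 0 →
      πxz p / ρxz p = exp (log (f p.1) + log (Λ p.2)) := by
    intro p hp
    obtain ⟨⟨hρ, hfp⟩, hΛp⟩ := mul_ne_zero_iff.1 hp |>.imp_left mul_ne_zero_iff.1
    rw [hπxz_eq, mul_assoc, mul_div_cancel_left₀ _ hρ, exp_add,
      exp_log ((hf0 _).lt_of_ne' hfp), exp_log ((hΛ0 _).lt_of_ne' hΛp)]
  refine dEnt_add_dEnt_le_of_div_eq_exp hσ hπ hσxy0 hσxz0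
    (fun p => hπxy_eq p ▸ mul_nonneg (hρxy0 p) (hf0 _))
    (fun p => hπxz_eq p ▸ mul_nonneg (mul_nonneg (hρxz0 p) (hf0 _)) (hΛ0 _))
    hσxy hσxz hπxy hπxz hf.log.aestronglyMeasurable hΛ.log.aestronglyMeasurable hρ₀f hQΛ
    hσxy_ent hσxz_ent ?_ ?_ (.of_forall fun p hp => hπxy_div p (hπxy_eq p ▸ hp))
    (.of_forall fun p hp => hπxz_div p (hπxz_eq p ▸ hp))
  · filter_upwards [hσxy_ρ, hσxy_f] with p h1 h2 hp
    exact hπxy_div p (mul_ne_zero (mt h1 hp) (mt h2 hp))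
  · filter_upwards [hσxz_ρ, hσxz_f, hσxz_Λ] with p h1 h2 h3 hp
    exact hπxz_div p (mul_ne_zero (mul_ne_zero (mt h1 hp) (mt h2 hp)) (mt h3 hp))

end Couplings

theorem IsCoupling.of_integral_integral {X Y W T : Type*} [MeasurableSpace X]
    [MeasurableSpace Y] [MeasurableSpace W] [MeasurableSpace T] {μ : Measure X} {ν : Measure Y}
    {ω : Measure W} {τ : Measure T} [SFinite μ] [SFinite ω] [SFinite τ]
    {ρ₀ : X → ℝ} {Q : W × T → ℝ} {πxy : X × Y → ℝ} {πxz : X × W × T → ℝ}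
    (hπxz : Integrable πxz (μ.prod (ω.prod τ)))
    (h₁ : ∀ᵐ x ∂μ, (∫ y, πxy (x, y) ∂ν) + ∫ t, ∫ w, πxz (x, w, t) ∂ω ∂τ = ρ₀ x)
    (h₂ : ∀ᵐ wt ∂(ω.prod τ), ∫ x, πxz (x, wt.1, wt.2) ∂μ = Q wt) :
    IsCoupling μ ν (ω.prod τ) ρ₀ Q πxy πxz := by
  refine ⟨?_, h₂⟩
  filter_upwards [h₁, hπxz.prod_right_ae] with x hx hi
  rwa [integral_prod_symm _ hi]

theorem schroedinger_couplings_optimality_general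
    (n : ℕ)
    (ρxy : (Fin n → ℝ) × (Fin n → ℝ) → ℝ)
    (ρxzt : (Fin n → ℝ) × (Fin n → ℝ) × ℝ → ℝ)
    (ρ₀ : (Fin n → ℝ) → ℝ) (Q : (Fin n → ℝ) × ℝ → ℝ)
    -- the restriction of Lebesgue measure to the time window `[0,1]`:
    (mzt : Measure ((Fin n → ℝ) × (Fin n → ℝ) × ℝ))
    (hmzt : mzt = (volume : Measure ((Fin n → ℝ) × (Fin n → ℝ) × ℝ)).restrict
      {p | p.2.2 ∈ Set.Icc (0:ℝ) 1})
    (mQ : Measure ((Fin n → ℝ) × ℝ))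
    (hmQ : mQ = (volume : Measure ((Fin n → ℝ) × ℝ)).restrict {p | p.2 ∈ Set.Icc (0:ℝ) 1})
    (hρxy_nonneg : ∀ p, 0 ≤ ρxy p) (hρxzt_nonneg : ∀ p, 0 ≤ ρxzt p)
    (hρxy_int : Integrable ρxy volume) (hρxzt_int : Integrable ρxzt mzt)
    (f : (Fin n → ℝ) → ℝ) (Λ : (Fin n → ℝ) × ℝ → ℝ)
    (hf_meas : Measurable f) (hf_nonneg : ∀ x, 0 ≤ f x)
    (hΛ_meas : Measurable Λ) (hΛ_nonneg : ∀ p, 0 ≤ Λ p)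
    -- the optimal couplings:
    (πxy : (Fin n → ℝ) × (Fin n → ℝ) → ℝ)
    (πxzt : (Fin n → ℝ) × (Fin n → ℝ) × ℝ → ℝ)
    (hπxy : ∀ p, πxy p = ρxy p * f p.1)
    (hπxzt : ∀ p, πxzt p = ρxzt p * f p.1 * Λ (p.2.1, p.2.2))
    -- the optimal couplings satisfy the two marginal constraints:
    (hC1 : ∀ᵐ x ∂(volume : Measure (Fin n → ℝ)),
      (∫ y, πxy (x, y)) + ∫ t in Set.Icc (0:ℝ) 1, ∫ z, πxzt (x, z, t) = ρ₀ x)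
    (hC2 : ∀ᵐ zt ∂mQ, (∫ x, πxzt (x, zt.1, zt.2)) = Q zt)
    -- finiteness: `D(π*_xy‖ρ_xy) + D(π*_xzt‖ρ_xzt) < ∞`,
    -- `∫ ρ₀ |log f| < ∞` and `∫∫ Q |log Λ| < ∞`:
    (hπxy_ent : Integrable (fun p => πxy p * Real.log (πxy p / ρxy p)) volume)
    (hπxzt_ent : Integrable (fun p => πxzt p * Real.log (πxzt p / ρxzt p)) mzt)
    (hρ₀f : Integrable (fun x => ρ₀ x * |Real.log (f x)|) volume)
    (hQΛ : Integrable (fun zt => Q zt * |Real.log (Λ zt)|) mQ) :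
    -- conclusion: optimality among all feasible couplings
    ∀ (σxy : (Fin n → ℝ) × (Fin n → ℝ) → ℝ)
      (σxzt : (Fin n → ℝ) × (Fin n → ℝ) × ℝ → ℝ),
      Measurable σxy → Measurable σxzt →
      (∀ p, 0 ≤ σxy p) → (∀ p, 0 ≤ σxzt p) →
      (∀ᵐ p ∂(volume : Measure ((Fin n → ℝ) × (Fin n → ℝ))), ρxy p = 0 → σxy p = 0) →
      (∀ᵐ p ∂mzt, ρxzt p = 0 → σxzt p = 0) →
      (∀ᵐ x ∂(volume : Measure (Fin n → ℝ)),
        (∫ y, σxy (x, y)) + ∫ t in Set.Icc (0:ℝ) 1, ∫ z, σxzt (x, z, t) = ρ₀ x) →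
      (∀ᵐ zt ∂mQ, (∫ x, σxzt (x, zt.1, zt.2)) = Q zt) →
      Integrable (fun p => σxy p * Real.log (σxy p / ρxy p)) volume →
      Integrable (fun p => σxzt p * Real.log (σxzt p / ρxzt p)) mzt →
      dEnt volume πxy ρxy + dEnt mzt πxzt ρxzt ≤
        dEnt volume σxy ρxy + dEnt mzt σxzt ρxzt := by
  intro σxy σxzt hσxy_meas hσxzt_meas hσxy0 hσxzt0 hσxy_ρ hσxzt_ρ hσ₁ hσ₂ hσxy_ent hσxzt_ent
  have hmzt' : mzt = (volume : Measure (Fin n → ℝ)).prod mQ := by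
    rw [hmzt, hmQ, Measure.volume_eq_prod]
    exact Measure.restrict_setOf_snd_mem (X := Fin n → ℝ) {q : (Fin n → ℝ) × ℝ | q.2 ∈ Set.Icc 0 1}
  rw [Measure.volume_eq_prod, Measure.restrict_setOf_snd_mem] at hmQ
  subst hmzt' hmQ
  have hπxy_int := integrable_of_eq_mul hρxy_int hρxy_nonneg
    (hf_meas.comp measurable_fst).aestronglyMeasurable (fun p => hf_nonneg _) hπxy hπxy_ent
  have hπxzt_int := integrable_of_eq_mul hρxzt_int hρxzt_nonneg
    ((hf_meas.comp measurable_fst).mul (hΛ_meas.comp measurable_snd)).aestronglyMeasurable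
    (fun p => mul_nonneg (hf_nonneg _) (hΛ_nonneg _)) (fun p => (hπxzt p).trans (mul_assoc _ _ _))
    hπxzt_ent
  have hσxy_int := integrable_of_integrable_mul_log_div hσxy_meas.aestronglyMeasurable hσxy0
    hρxy_nonneg hρxy_int hσxy_ρ hσxy_ent
  have hσxzt_int := integrable_of_integrable_mul_log_div hσxzt_meas.aestronglyMeasurable hσxzt0
    hρxzt_nonneg hρxzt_int hσxzt_ρ hσxzt_ent
  exact dEnt_add_dEnt_le_of_eq_mul (IsCoupling.of_integral_integral hσxzt_int hσ₁ hσ₂)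
    (IsCoupling.of_integral_integral hπxzt_int hC1 hC2) hρxy_nonneg hρxzt_nonneg hf_meas
    hf_nonneg hΛ_meas hΛ_nonneg hπxy hπxzt hπxy_int hπxzt_int hρ₀f hQΛ hσxy_meas hσxzt_meas
    hσxy0 hσxzt0 hσxy_int hσxzt_int hσxy_ρ hσxzt_ρ hσxy_ent hσxzt_ent

/-- Optimality certificate for Problem 2: couplings of the multiplicative form
`π*_xy(x,y) = ρ_xy(x,y) f(x)` and `π*_xzt(x,z,t) = ρ_xzt(x,z,t) f(x) Λ(z,t)` dictated by the
first-order Lagrangian conditions minimize `D(π_xy‖ρ_xy) + D(π_xzt‖ρ_xzt)` among all couplings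
matching the initial marginal `ρ₀` and the spatio-temporal killing marginal `Q`.
(A candidate pair with non-integrable relative-entropy integrand has `D = +∞` and satisfies
the inequality trivially; hence the integrability premise in the conclusion.) -/
theorem schroedinger_couplings_optimality
    (n : ℕ) (hn : 1 ≤ n)
    (ρxy : (Fin n → ℝ) × (Fin n → ℝ) → ℝ)
    (ρxzt : (Fin n → ℝ) × (Fin n → ℝ) × ℝ → ℝ)
    (ρ₀ : (Fin n → ℝ) → ℝ) (Q : (Fin n → ℝ) × ℝ → ℝ)
    -- the restriction of Lebesgue measure to the time window `[0,1]`: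
    (mzt : Measure ((Fin n → ℝ) × (Fin n → ℝ) × ℝ))
    (hmzt : mzt = (volume : Measure ((Fin n → ℝ) × (Fin n → ℝ) × ℝ)).restrict
      {p | p.2.2 ∈ Set.Icc (0:ℝ) 1})
    (mQ : Measure ((Fin n → ℝ) × ℝ))
    (hmQ : mQ = (volume : Measure ((Fin n → ℝ) × ℝ)).restrict {p | p.2 ∈ Set.Icc (0:ℝ) 1})
    (hρxy_nonneg : ∀ p, 0 ≤ ρxy p) (hρxzt_nonneg : ∀ p, 0 ≤ ρxzt p)
    (hρ₀_nonneg : ∀ x, 0 ≤ ρ₀ x) (hQ_nonneg : ∀ p, 0 ≤ Q p)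
    (hρxy_int : Integrable ρxy volume) (hρxzt_int : Integrable ρxzt mzt)
    (hρ₀_int : Integrable ρ₀ volume) (hQ_meas : Measurable Q)
    (f : (Fin n → ℝ) → ℝ) (Λ : (Fin n → ℝ) × ℝ → ℝ)
    (hf_meas : Measurable f) (hf_nonneg : ∀ x, 0 ≤ f x)
    (hΛ_meas : Measurable Λ) (hΛ_nonneg : ∀ p, 0 ≤ Λ p)
    -- the optimal couplings:
    (πxy : (Fin n → ℝ) × (Fin n → ℝ) → ℝ)
    (πxzt : (Fin n → ℝ) × (Fin n → ℝ) × ℝ → ℝ)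
    (hπxy : ∀ p, πxy p = ρxy p * f p.1)
    (hπxzt : ∀ p, πxzt p = ρxzt p * f p.1 * Λ (p.2.1, p.2.2))
    -- the optimal couplings satisfy the two marginal constraints:
    (hC1 : ∀ᵐ x ∂(volume : Measure (Fin n → ℝ)),
      (∫ y, πxy (x, y)) + ∫ t in Set.Icc (0:ℝ) 1, ∫ z, πxzt (x, z, t) = ρ₀ x)
    (hC2 : ∀ᵐ zt ∂mQ, (∫ x, πxzt (x, zt.1, zt.2)) = Q zt)
    -- finiteness: `D(π*_xy‖ρ_xy) + D(π*_xzt‖ρ_xzt) < ∞`,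
    -- `∫ ρ₀ |log f| < ∞` and `∫∫ Q |log Λ| < ∞`:
    (hπxy_ent : Integrable (fun p => πxy p * Real.log (πxy p / ρxy p)) volume)
    (hπxzt_ent : Integrable (fun p => πxzt p * Real.log (πxzt p / ρxzt p)) mzt)
    (hρ₀f : Integrable (fun x => ρ₀ x * |Real.log (f x)|) volume)
    (hQΛ : Integrable (fun zt => Q zt * |Real.log (Λ zt)|) mQ) :
    -- conclusion: optimality among all feasible couplings
    ∀ (σxy : (Fin n → ℝ) × (Fin n → ℝ) → ℝ)
      (σxzt : (Fin n → ℝ) × (Fin n → ℝ) × ℝ → ℝ),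
      Measurable σxy → Measurable σxzt →
      (∀ p, 0 ≤ σxy p) → (∀ p, 0 ≤ σxzt p) →
      (∀ᵐ p ∂(volume : Measure ((Fin n → ℝ) × (Fin n → ℝ))), ρxy p = 0 → σxy p = 0) →
      (∀ᵐ p ∂mzt, ρxzt p = 0 → σxzt p = 0) →
      (∀ᵐ x ∂(volume : Measure (Fin n → ℝ)),
        (∫ y, σxy (x, y)) + ∫ t in Set.Icc (0:ℝ) 1, ∫ z, σxzt (x, z, t) = ρ₀ x) →
      (∀ᵐ zt ∂mQ, (∫ x, σxzt (x, zt.1, zt.2)) = Q zt) →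
      Integrable (fun p => σxy p * Real.log (σxy p / ρxy p)) volume →
      Integrable (fun p => σxzt p * Real.log (σxzt p / ρxzt p)) mzt →
      dEnt volume πxy ρxy + dEnt mzt πxzt ρxzt ≤
        dEnt volume σxy ρxy + dEnt mzt σxzt ρxzt :=
  schroedinger_couplings_optimality_general n ρxy ρxzt ρ₀ Q mzt hmzt mQ hmQ hρxy_nonneg hρxzt_nonneg
    hρxy_int hρxzt_int f Λ hf_meas hf_nonneg hΛ_meas hΛ_nonneg πxy πxzt hπxy hπxzt hC1 hC2 hπxy_ent
    hπxzt_ent hρ₀f hQΛ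
end

section
/- Let n ≥ 1 and let r(s,x,t,y) > 0 be a measurable family of transition densities defined for 0 ≤ s ≤ t ≤ 1 and x, y ∈ ℝⁿ. Let V, Λ : [0,1]×ℝⁿ → [0,∞) be measurable and φ̂₀ : ℝⁿ → [0,∞) be measurable. Define φ̂(τ,w) := ∫_{ℝⁿ} r(0,x,τ,w) φ̂₀(x) dx and φ(τ,w) := ∫_{ℝⁿ} r(τ,w,1,y) dy + ∫_τ^1 ∫_{ℝⁿ} Λ(t,z) V(t,z) r(τ,w,t,z) dz dt. Define the couplings π*_xy(x,y) := r(0,x,1,y) φ̂₀(x) and π*_xzt(x,z,t) := Λ(t,z) V(t,z) r(0,x,t,z) φ̂₀(x), and for τ ∈ [0,1] and w ∈ ℝⁿ define the one-time density P_τ(w) := ∫_{ℝⁿ×ℝⁿ} [r(0,x,τ,w) r(τ,w,1,y)/r(0,x,1,y)] π*_xy(x,y) dx dy + ∫_τ^1 ∫_{ℝⁿ×ℝⁿ} [r(0,x,τ,w) r(τ,w,t,z)/r(0,x,t,z)] π*_xzt(x,z,t) dx dz dt. Then P_τ(w) = φ(τ,w) φ̂(τ,w) for every τ ∈ [0,1]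 and w ∈ ℝⁿ. -/
open MeasureTheory

/-- The backward factor (FS1):
`φ(τ,w) = ∫ r(τ,w,1,y) dy + ∫_τ^1 ∫ Λ(t,z) V(t,z) r(τ,w,t,z) dz dt`. -/
noncomputable def phiBackward (n : ℕ)
    (r : ℝ → (Fin n → ℝ) → ℝ → (Fin n → ℝ) → ℝ)
    (V Λ : ℝ → (Fin n → ℝ) → ℝ) (τ : ℝ) (w : Fin n → ℝ) : ℝ :=
  (∫ y, r τ w 1 y) + ∫ t in τ..1, ∫ z, Λ t z * V t z * r τ w t z

/-- The forward factor (FS3): `φ̂(τ,w) = ∫ r(0,x,τ,w) phihat0(x) dx`. -/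
noncomputable def phiForward (n : ℕ)
    (r : ℝ → (Fin n → ℝ) → ℝ → (Fin n → ℝ) → ℝ)
    (phihat0 : (Fin n → ℝ) → ℝ) (τ : ℝ) (w : Fin n → ℝ) : ℝ :=
  ∫ x, r 0 x τ w * phihat0 x

/-- The optimal survival coupling `π*_xy(x,y) = r(0,x,1,y) phihat0(x)`. -/
noncomputable def couplingXY (n : ℕ)
    (r : ℝ → (Fin n → ℝ) → ℝ → (Fin n → ℝ) → ℝ)
    (phihat0 : (Fin n → ℝ) → ℝ) (x y : Fin n → ℝ) : ℝ :=
  r 0 x 1 y * phihat0 x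

/-- The optimal killing coupling `π*_xzt(x,z,t) = Λ(t,z) V(t,z) r(0,x,t,z) phihat0(x)`. -/
noncomputable def couplingXZT (n : ℕ)
    (r : ℝ → (Fin n → ℝ) → ℝ → (Fin n → ℝ) → ℝ)
    (V Λ : ℝ → (Fin n → ℝ) → ℝ) (phihat0 : (Fin n → ℝ) → ℝ)
    (x z : Fin n → ℝ) (t : ℝ) : ℝ :=
  Λ t z * V t z * r 0 x t z * phihat0 x

/-- The one-time density of the optimal posterior restricted to the primary space:
the mixture, under the optimal couplings, of the one-time densities at time `τ` of the prior
process pinned at `x` at time `0` and at `y` (resp. `z`) at time `1` (resp. the killing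
time `t`). -/
noncomputable def Pdensity (n : ℕ)
    (r : ℝ → (Fin n → ℝ) → ℝ → (Fin n → ℝ) → ℝ)
    (V Λ : ℝ → (Fin n → ℝ) → ℝ) (phihat0 : (Fin n → ℝ) → ℝ)
    (τ : ℝ) (w : Fin n → ℝ) : ℝ :=
  (∫ p : (Fin n → ℝ) × (Fin n → ℝ),
      r 0 p.1 τ w * r τ w 1 p.2 / r 0 p.1 1 p.2 * couplingXY n r phihat0 p.1 p.2)
    + ∫ t in τ..1, ∫ p : (Fin n → ℝ) × (Fin n → ℝ),
        r 0 p.1 τ w * r τ w t p.2 / r 0 p.1 t p.2 * couplingXZT n r V Λ phihat0 p.1 p.2 t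

/-! In each term of `P_τ(w)` the transition factor of the coupling cancels the denominator of
the pinned density, leaving `(r(0,x,τ,w) φ̂₀(x)) · (g(z) r(τ,w,t,z))` with `g = 1` for survival and
`g = Λ(t,·) V(t,·)` for killing: a function of the initial point times a function of the end point. Its integral over the product
space is therefore `φ̂(τ,w)` times the corresponding part of `φ(τ,w)`. -/

section PinnedMixture

variable {α β : Type*} [MeasurableSpace α] [MeasurableSpace β]
  {μ : Measure α} {ν : Measure β} [SFinite μ] [SFinite ν]

theorem integral_pinned_mul_coupling (a c : α → ℝ) (b d : β → ℝ) (k π : α → β → ℝ)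
    (hk : ∀ x y, k x y ≠ 0) (hπ : ∀ x y, π x y = k x y * (c x * d y)) :
    ∫ p, a p.1 * b p.2 / k p.1 p.2 * π p.1 p.2 ∂μ.prod ν =
      (∫ x, a x * c x ∂μ) * ∫ y, d y * b y ∂ν := by
  have hcancel : ∀ p : α × β, a p.1 * b p.2 / k p.1 p.2 * π p.1 p.2 =
      a p.1 * c p.1 * (d p.2 * b p.2) := fun p => by
    rw [hπ]
    field_simp [hk p.1 p.2]
  simp_rw [hcancel]
  exact integral_prod_mul (fun x => a x * c x) (fun y => d y * b y)

end PinnedMixture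

theorem Pdensity_eq_phi_mul_phiHat_general
    (n : ℕ)
    (r : ℝ → (Fin n → ℝ) → ℝ → (Fin n → ℝ) → ℝ)
    (hr_pos : ∀ s x t y, 0 ≤ s → s ≤ t → t ≤ 1 → 0 < r s x t y)
    (V Λ : ℝ → (Fin n → ℝ) → ℝ)
    (phihat0 : (Fin n → ℝ) → ℝ) :
    ∀ τ : ℝ, τ ∈ Set.Icc (0:ℝ) 1 → ∀ w : Fin n → ℝ,
      Pdensity n r V Λ phihat0 τ w =
        phiBackward n r V Λ τ w * phiForward n r phihat0 τ w := by
  rintro τ ⟨hτ0, hτ1⟩ w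
  have hsurvival :
      (∫ p : (Fin n → ℝ) × (Fin n → ℝ),
        r 0 p.1 τ w * r τ w 1 p.2 / r 0 p.1 1 p.2 * couplingXY n r phihat0 p.1 p.2) =
      phiForward n r phihat0 τ w * ∫ y, r τ w 1 y := by
    refine (integral_pinned_mul_coupling (μ := volume) (ν := volume)
      (fun x => r 0 x τ w) phihat0 (fun y => r τ w 1 y) (fun _ => 1) (fun x y => r 0 x 1 y)
      (couplingXY n r phihat0) (fun x y => (hr_pos 0 x 1 y le_rfl zero_le_one le_rfl).ne')
      (fun x y => by simp [couplingXY])).trans ?_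
    simp only [one_mul, phiForward]
  have hkilling : ∀ t ∈ Set.uIcc τ 1,
      (∫ p : (Fin n → ℝ) × (Fin n → ℝ),
        r 0 p.1 τ w * r τ w t p.2 / r 0 p.1 t p.2 * couplingXZT n r V Λ phihat0 p.1 p.2 t) =
      phiForward n r phihat0 τ w * ∫ z, Λ t z * V t z * r τ w t z := by
    intro t ht
    rw [Set.uIcc_of_le hτ1] at ht
    exact integral_pinned_mul_coupling (μ := volume) (ν := volume)
      (fun x => r 0 x τ w) phihat0 (fun z => r τ w t z) (fun z => Λ t z * V t z)
      (fun x z => r 0 x t z) (fun x z => couplingXZT n r V Λ phihat0 x z t)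
      (fun x z => (hr_pos 0 x t z le_rfl (hτ0.trans ht.1) ht.2).ne')
      (fun x z => by simp only [couplingXZT]; ring)
  rw [Pdensity, intervalIntegral.integral_congr hkilling, intervalIntegral.integral_const_mul,
    hsurvival, phiBackward]
  ring

/-- Equation (12) of Theorem 1(iii): the one-time marginals of the optimal posterior
restricted to the primary space factor as `P_τ = φ(τ,·) φ̂(τ,·)`. -/
theorem Pdensity_eq_phi_mul_phiHat
    (n : ℕ) (hn : 1 ≤ n)
    (r : ℝ → (Fin n → ℝ) → ℝ → (Fin n → ℝ) → ℝ)
    (hr_meas : Measurable (fun p : ℝ × (Fin n → ℝ) × ℝ × (Fin n → ℝ) =>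
      r p.1 p.2.1 p.2.2.1 p.2.2.2))
    (hr_pos : ∀ s x t y, 0 ≤ s → s ≤ t → t ≤ 1 → 0 < r s x t y)
    (V Λ : ℝ → (Fin n → ℝ) → ℝ)
    (hV_meas : Measurable (fun p : ℝ × (Fin n → ℝ) => V p.1 p.2))
    (hΛ_meas : Measurable (fun p : ℝ × (Fin n → ℝ) => Λ p.1 p.2))
    (hV_nonneg : ∀ t z, 0 ≤ V t z) (hΛ_nonneg : ∀ t z, 0 ≤ Λ t z)
    (phihat0 : (Fin n → ℝ) → ℝ) (hphihat0_meas : Measurable phihat0) (hphihat0_nonneg : ∀ x, 0 ≤ phihat0 x) :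
    ∀ τ : ℝ, τ ∈ Set.Icc (0:ℝ) 1 → ∀ w : Fin n → ℝ,
      Pdensity n r V Λ phihat0 τ w =
        phiBackward n r V Λ τ w * phiForward n r phihat0 τ w :=
  Pdensity_eq_phi_mul_phiHat_general n r hr_pos V Λ phihat0
end

section
/- Let n ≥ 1 and let a : (0,1)×ℝⁿ → ℝ^{n×n} with a_{ij} = a_{ji}, b : (0,1)×ℝⁿ → ℝⁿ, V, Λ : (0,1)×ℝⁿ → ℝ, and φ, φ̂ : (0,1)×ℝⁿ → ℝ be functions such that φ and φ̂ are C¹ in time and C² in space, a is C² in space, b is C¹ in space, and φ(t,x) > 0 for all (t,x). Assume that for all (t,x): ∂_t φ = −∑_i b_i ∂_{x_i} φ − (1/2) ∑_{i,j} a_{ij} ∂²_{x_i x_j} φ + V φ − V Λ, and ∂_t φ̂ = −∑_i ∂_{x_i}(b_i φ̂) + (1/2) ∑_{i,j} ∂²_{x_i x_j}(a_{ij} φ̂) − V φ̂. Then P := φ φ̂ satisfies, for all (t,x): ∂_t P = −∑_i ∂_{x_i}( (b_i + ∑_j a_{ij} ∂_{x_j} log φ) P ) + (1/2) ∑_{i,j}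 ∂²_{x_i x_j}(a_{ij} P) − (Λ/φ) V P. -/
/-- Partial derivative of `f : ℝⁿ → ℝ` in the `i`-th coordinate direction. -/
noncomputable def pd {n : ℕ} (i : Fin n) (f : (Fin n → ℝ) → ℝ) (x : Fin n → ℝ) : ℝ :=
  fderiv ℝ f x (Pi.single i 1)

/-- Partial derivative in time of `f : (0,1) × ℝⁿ → ℝ` (time first). -/
noncomputable def pt {n : ℕ} (f : ℝ → (Fin n → ℝ) → ℝ) (t : ℝ) (x : Fin n → ℝ) : ℝ :=
  deriv (fun s => f s x) t

/-!
Writing `L f = b·∇f + ½ ∑ a_{ij} ∂_{ij} f` for the backward generator and `L*` for its formal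
adjoint, the product rule in time gives `∂_t(φφ̂) = φ L*φ̂ − φ̂ Lφ − VΛφ̂`. The spatial part is
Doob's h-transform identity `φ L*φ̂ − φ̂ Lφ = L*_φ(φφ̂)`, where `L*_φ` is the adjoint generator
with drift `b + a∇log φ`: since `φ ∂_j log φ = ∂_j φ`, both sides expand by the Leibniz rule
into the same terms, the two mixed terms `∂_i(a_{ij}φ̂) ∂_j φ` and `∂_j(a_{ij}φ̂) ∂_i φ` of
`∂_{ij}(a_{ij}φφ̂)` being equal after summation because `a` is symmetric.
-/

section PartialDerivatives

variable {n : ℕ}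

theorem pd_add (i : Fin n) {f g : (Fin n → ℝ) → ℝ} {x : Fin n → ℝ}
    (hf : DifferentiableAt ℝ f x) (hg : DifferentiableAt ℝ g x) :
    pd i (fun w => f w + g w) x = pd i f x + pd i g x := by
  simp only [pd, fderiv_fun_add hf hg, add_apply]

theorem pd_mul (i : Fin n) {f g : (Fin n → ℝ) → ℝ} {x : Fin n → ℝ}
    (hf : DifferentiableAt ℝ f x) (hg : DifferentiableAt ℝ g x) :
    pd i (fun w => f w * g w) x = pd i f x * g x + f x * pd i g x := by
  simp only [pd, fderiv_fun_mul hf hg, add_apply, smul_apply, smul_eq_mul]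
  ring

theorem pd_sum {m : ℕ} (i : Fin n) {f : Fin m → (Fin n → ℝ) → ℝ} {x : Fin n → ℝ}
    (hf : ∀ j, DifferentiableAt ℝ (f j) x) :
    pd i (fun w => ∑ j, f j w) x = ∑ j, pd i (f j) x := by
  simp only [pd, fderiv_fun_sum (fun j _ => hf j), FunLike.coe_sum, Finset.sum_apply]

theorem pd_log (i : Fin n) {f : (Fin n → ℝ) → ℝ} {x : Fin n → ℝ}
    (hf : DifferentiableAt ℝ f x) (hx : f x ≠ 0) :
    pd i (fun w => Real.log (f w)) x = pd i f x / f x := by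
  simp only [pd, (hf.hasFDerivAt.log hx).fderiv, smul_apply, smul_eq_mul]
  ring

theorem differentiable_pd (i : Fin n) {f : (Fin n → ℝ) → ℝ} (hf : ContDiff ℝ 2 f) :
    Differentiable ℝ (pd i f) := by
  have hdf : Differentiable ℝ (fderiv ℝ f) :=
    (hf.fderiv_right (m := 1) (by norm_num)).differentiable one_ne_zero
  exact (ContinuousLinearMap.apply ℝ ℝ (Pi.single i 1)).differentiable.comp hdf

theorem pd_pd_mul (i j : Fin n) {f g : (Fin n → ℝ) → ℝ} (hf : ContDiff ℝ 2 f)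
    (hg : ContDiff ℝ 2 g) (x : Fin n → ℝ) :
    pd i (pd j (fun w => f w * g w)) x
      = pd i (pd j f) x * g x + pd j f x * pd i g x + pd i f x * pd j g x
        + f x * pd i (pd j g) x := by
  have hf' := hf.differentiable two_ne_zero
  have hg' := hg.differentiable two_ne_zero
  have hfirst : pd j (fun w => f w * g w) = fun w => pd j f w * g w + f w * pd j g w :=
    funext fun w => pd_mul j (hf' w) (hg' w)
  rw [hfirst, pd_add i ((differentiable_pd j hf x).fun_mul (hg' x))
      ((hf' x).fun_mul (differentiable_pd j hg x)), pd_mul i (differentiable_pd j hf x) (hg' x),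
    pd_mul i (hf' x) (differentiable_pd j hg x)]
  ring

theorem pt_mul {f g : ℝ → (Fin n → ℝ) → ℝ} {t : ℝ} {x : Fin n → ℝ}
    (hf : DifferentiableAt ℝ (fun s => f s x) t) (hg : DifferentiableAt ℝ (fun s => g s x) t) :
    pt (fun s w => f s w * g s w) t x = pt f t x * g t x + f t x * pt g t x :=
  deriv_fun_mul hf hg

end PartialDerivatives

section Generators

variable {n : ℕ}

noncomputable def generator (b : (Fin n → ℝ) → Fin n → ℝ) (a : (Fin n → ℝ) → Fin n → Fin n → ℝ)
    (f : (Fin n → ℝ) → ℝ) (x : Fin n → ℝ) : ℝ :=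
  ∑ i, b x i * pd i f x + (1/2) * ∑ i, ∑ j, a x i j * pd i (pd j f) x

noncomputable def adjointGenerator (b : (Fin n → ℝ) → Fin n → ℝ)
    (a : (Fin n → ℝ) → Fin n → Fin n → ℝ) (g : (Fin n → ℝ) → ℝ) (x : Fin n → ℝ) : ℝ :=
  -(∑ i, pd i (fun w => b w i * g w) x) + (1/2) * ∑ i, ∑ j, pd i (pd j (fun w => a w i j * g w)) x

noncomputable def logGradDrift (b : (Fin n → ℝ) → Fin n → ℝ)
    (a : (Fin n → ℝ) → Fin n → Fin n → ℝ) (φ : (Fin n → ℝ) → ℝ) (w : Fin n → ℝ) (i : Fin n) : ℝ :=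
  b w i + ∑ j, a w i j * pd j (fun v => Real.log (φ v)) w

variable {b : (Fin n → ℝ) → Fin n → ℝ} {a : (Fin n → ℝ) → Fin n → Fin n → ℝ}
  {φ ψ : (Fin n → ℝ) → ℝ}

theorem logGradDrift_mul_mul {w : Fin n → ℝ} (hφ : DifferentiableAt ℝ φ w) (hφ_ne : φ w ≠ 0)
    (i : Fin n) :
    logGradDrift b a φ w i * (φ w * ψ w)
      = b w i * ψ w * φ w + ∑ j, a w i j * ψ w * pd j φ w := by
  simp only [logGradDrift, pd_log _ hφ hφ_ne, add_mul, Finset.sum_mul]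
  congr 1
  · ring
  · refine Finset.sum_congr rfl fun j _ => ?_
    field_simp

theorem pd_logGradDrift_flux (hb : ∀ i, Differentiable ℝ (fun x => b x i))
    (ha : ∀ i j, Differentiable ℝ (fun x => a x i j)) (hφ : ContDiff ℝ 2 φ)
    (hφ_ne : ∀ x, φ x ≠ 0) (hψ : Differentiable ℝ ψ) (i : Fin n) (x : Fin n → ℝ) :
    pd i (fun w => logGradDrift b a φ w i * (φ w * ψ w)) x
      = φ x * pd i (fun w => b w i * ψ w) x + ψ x * (b x i * pd i φ x)
        + ∑ j, (pd i (fun w => a w i j * ψ w) x * pd j φ x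
          + ψ x * (a x i j * pd i (pd j φ) x)) := by
  have hφ' := hφ.differentiable two_ne_zero
  have hbψ : Differentiable ℝ (fun w => b w i * ψ w) := (hb i).mul hψ
  have haψ : ∀ j, Differentiable ℝ (fun w => a w i j * ψ w) := fun j => (ha i j).mul hψ
  simp only [logGradDrift_mul_mul (hφ' _) (hφ_ne _)]
  rw [pd_add i ((hbψ x).fun_mul (hφ' x))
      (DifferentiableAt.fun_sum fun j _ => (haψ j x).fun_mul (differentiable_pd j hφ x)),
    pd_mul i (hbψ x) (hφ' x),
    pd_sum i fun j => (haψ j x).fun_mul (differentiable_pd j hφ x)]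
  simp only [pd_mul i (haψ _ x) (differentiable_pd _ hφ x)]
  congr 1
  · ring
  · exact Finset.sum_congr rfl fun j _ => by ring

theorem sum_sum_pd_mul_pd_comm (ha_symm : ∀ x i j, a x i j = a x j i) (x : Fin n → ℝ) :
    ∑ i, ∑ j, pd j (fun w => a w i j * ψ w) x * pd i φ x
      = ∑ i, ∑ j, pd i (fun w => a w i j * ψ w) x * pd j φ x := by
  rw [Finset.sum_comm]
  refine Finset.sum_congr rfl fun i _ => Finset.sum_congr rfl fun j _ => ?_
  simp only [ha_symm _ j i]

theorem adjointGenerator_logGradDrift_mul (ha_symm : ∀ x i j, a x i j = a x j i)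
    (hb : ∀ i, Differentiable ℝ (fun x => b x i)) (ha : ∀ i j, ContDiff ℝ 2 (fun x => a x i j))
    (hφ : ContDiff ℝ 2 φ) (hφ_ne : ∀ x, φ x ≠ 0) (hψ : ContDiff ℝ 2 ψ) (x : Fin n → ℝ) :
    adjointGenerator (logGradDrift b a φ) a (fun w => φ w * ψ w) x
      = φ x * adjointGenerator b a ψ x - ψ x * generator b a φ x := by
  have hsecond : ∀ i j, pd i (pd j (fun w => a w i j * (φ w * ψ w))) x
      = φ x * pd i (pd j (fun w => a w i j * ψ w)) x
        + pd j (fun w => a w i j * ψ w) x * pd i φ x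
        + pd i (fun w => a w i j * ψ w) x * pd j φ x
        + ψ x * (a x i j * pd i (pd j φ) x) := by
    intro i j
    have hassoc : (fun w => a w i j * (φ w * ψ w)) = fun w => a w i j * ψ w * φ w :=
      funext fun w => by ring
    rw [hassoc, pd_pd_mul i j ((ha i j).mul hψ) hφ x]
    ring
  have hsymm := sum_sum_pd_mul_pd_comm (φ := φ) (ψ := ψ) ha_symm x
  have hflux := pd_logGradDrift_flux hb (fun i j => (ha i j).differentiable two_ne_zero) hφ
    hφ_ne (hψ.differentiable two_ne_zero)
  simp only [adjointGenerator, generator, hflux, hsecond,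
    Finset.sum_add_distrib, ← Finset.mul_sum]
  linear_combination (1/2 : ℝ) * hsymm

end Generators

theorem product_solves_controlled_FokkerPlanck_general
    (n : ℕ)
    (a : ℝ → (Fin n → ℝ) → Fin n → Fin n → ℝ)
    (b : ℝ → (Fin n → ℝ) → Fin n → ℝ)
    (V Λ : ℝ → (Fin n → ℝ) → ℝ)
    (φ φh : ℝ → (Fin n → ℝ) → ℝ)
    -- symmetry of the diffusion matrix:
    (ha_symm : ∀ t x i j, a t x i j = a t x j i)
    -- smoothness: φ and φ̂ are C¹ in time and C² in space, a is C² in space,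
    -- b is C¹ in space:
    (hφ_time : ∀ x, ContDiffOn ℝ 1 (fun t => φ t x) (Set.Ioo (0:ℝ) 1))
    (hφh_time : ∀ x, ContDiffOn ℝ 1 (fun t => φh t x) (Set.Ioo (0:ℝ) 1))
    (hφ_space : ∀ t ∈ Set.Ioo (0:ℝ) 1, ContDiff ℝ 2 (φ t))
    (hφh_space : ∀ t ∈ Set.Ioo (0:ℝ) 1, ContDiff ℝ 2 (φh t))
    (ha_space : ∀ t ∈ Set.Ioo (0:ℝ) 1, ∀ i j, ContDiff ℝ 2 (fun x => a t x i j))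
    (hb_space : ∀ t ∈ Set.Ioo (0:ℝ) 1, ∀ i, ContDiff ℝ 1 (fun x => b t x i))
    -- positivity of the backward factor:
    (hφ_pos : ∀ t ∈ Set.Ioo (0:ℝ) 1, ∀ x, 0 < φ t x)
    -- the Kolmogorov backward equation with killing rate V and source VΛ:
    (hback : ∀ t ∈ Set.Ioo (0:ℝ) 1, ∀ x,
      pt φ t x = -(∑ i, b t x i * pd i (φ t) x)
        - (1/2) * ∑ i, ∑ j, a t x i j * pd i (pd j (φ t)) x
        + V t x * φ t x - V t x * Λ t x)
    -- the Kolmogorov forward (Fokker–Planck) equation with killing rate V: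
    (hfor : ∀ t ∈ Set.Ioo (0:ℝ) 1, ∀ x,
      pt φh t x = -(∑ i, pd i (fun w => b t w i * φh t w) x)
        + (1/2) * ∑ i, ∑ j, pd i (pd j (fun w => a t w i j * φh t w)) x
        - V t x * φh t x) :
    -- conclusion: P = φφ̂ solves the controlled Fokker–Planck equation
    ∀ t ∈ Set.Ioo (0:ℝ) 1, ∀ x,
      pt (fun s w => φ s w * φh s w) t x =
        -(∑ i, pd i (fun w =>
            (b t w i + ∑ j, a t w i j * pd j (fun v => Real.log (φ t v)) w)
              * (φ t w * φh t w)) x)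
        + (1/2) * ∑ i, ∑ j, pd i (pd j (fun w => a t w i j * (φ t w * φh t w))) x
        - (Λ t x / φ t x) * V t x * (φ t x * φh t x) := by
  intro t ht x
  have hdiff_time {f : ℝ → (Fin n → ℝ) → ℝ} (hf : ContDiffOn ℝ 1 (fun s => f s x) (Set.Ioo 0 1)) :
      DifferentiableAt ℝ (fun s => f s x) t :=
    (hf.contDiffAt (isOpen_Ioo.mem_nhds ht)).differentiableAt one_ne_zero
  have hhtransform := adjointGenerator_logGradDrift_mul (ha_symm t)
    (fun i => (hb_space t ht i).differentiable one_ne_zero) (ha_space t ht) (hφ_space t ht)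
    (fun w => (hφ_pos t ht w).ne') (hφh_space t ht) x
  have hkill : Λ t x / φ t x * V t x * (φ t x * φh t x) = V t x * Λ t x * φh t x := by
    field_simp [(hφ_pos t ht x).ne']
  simp only [adjointGenerator, generator, logGradDrift] at hhtransform
  rw [pt_mul (hdiff_time (hφ_time x)) (hdiff_time (hφh_time x)), hback t ht x, hfor t ht x,
    hhtransform, hkill]
  ring

/-- PDE verification in Theorem 1(iii): if `φ > 0` solves the Kolmogorov backward equation
`∂_t φ = −b·∇φ − (1/2)∑ a_{ij} ∂²_{ij} φ + Vφ − VΛ` and `φ̂` solves the Kolmogorov forward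
(Fokker–Planck) equation `∂_t φ̂ = −∇·(bφ̂) + (1/2)∑ ∂²_{ij}(a_{ij} φ̂) − Vφ̂`, then
`P = φφ̂` solves the Fokker–Planck equation of the controlled process, whose drift is
updated by the feedback term `a∇log φ` and whose killing rate is rescaled to `(Λ/φ)V`. -/
theorem product_solves_controlled_FokkerPlanck
    (n : ℕ) (hn : 1 ≤ n)
    (a : ℝ → (Fin n → ℝ) → Fin n → Fin n → ℝ)
    (b : ℝ → (Fin n → ℝ) → Fin n → ℝ)
    (V Λ : ℝ → (Fin n → ℝ) → ℝ)
    (φ φh : ℝ → (Fin n → ℝ) → ℝ)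
    -- symmetry of the diffusion matrix:
    (ha_symm : ∀ t x i j, a t x i j = a t x j i)
    -- smoothness: φ and φ̂ are C¹ in time and C² in space, a is C² in space,
    -- b is C¹ in space:
    (hφ_time : ∀ x, ContDiffOn ℝ 1 (fun t => φ t x) (Set.Ioo (0:ℝ) 1))
    (hφh_time : ∀ x, ContDiffOn ℝ 1 (fun t => φh t x) (Set.Ioo (0:ℝ) 1))
    (hφ_space : ∀ t ∈ Set.Ioo (0:ℝ) 1, ContDiff ℝ 2 (φ t))
    (hφh_space : ∀ t ∈ Set.Ioo (0:ℝ) 1, ContDiff ℝ 2 (φh t))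
    (ha_space : ∀ t ∈ Set.Ioo (0:ℝ) 1, ∀ i j, ContDiff ℝ 2 (fun x => a t x i j))
    (hb_space : ∀ t ∈ Set.Ioo (0:ℝ) 1, ∀ i, ContDiff ℝ 1 (fun x => b t x i))
    -- positivity of the backward factor:
    (hφ_pos : ∀ t ∈ Set.Ioo (0:ℝ) 1, ∀ x, 0 < φ t x)
    -- the Kolmogorov backward equation with killing rate V and source VΛ:
    (hback : ∀ t ∈ Set.Ioo (0:ℝ) 1, ∀ x,
      pt φ t x = -(∑ i, b t x i * pd i (φ t) x)
        - (1/2) * ∑ i, ∑ j, a t x i j * pd i (pd j (φ t)) x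
        + V t x * φ t x - V t x * Λ t x)
    -- the Kolmogorov forward (Fokker–Planck) equation with killing rate V:
    (hfor : ∀ t ∈ Set.Ioo (0:ℝ) 1, ∀ x,
      pt φh t x = -(∑ i, pd i (fun w => b t w i * φh t w) x)
        + (1/2) * ∑ i, ∑ j, pd i (pd j (fun w => a t w i j * φh t w)) x
        - V t x * φh t x) :
    -- conclusion: P = φφ̂ solves the controlled Fokker–Planck equation
    ∀ t ∈ Set.Ioo (0:ℝ) 1, ∀ x,
      pt (fun s w => φ s w * φh s w) t x =
        -(∑ i, pd i (fun w =>
            (b t w i + ∑ j, a t w i j * pd j (fun v => Real.log (φ t v)) w)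
              * (φ t w * φh t w)) x)
        + (1/2) * ∑ i, ∑ j, pd i (pd j (fun w => a t w i j * (φ t w * φh t w))) x
        - (Λ t x / φ t x) * V t x * (φ t x * φh t x) :=
  product_solves_controlled_FokkerPlanck_general n a b V Λ φ φh ha_symm hφ_time hφh_time hφ_space
    hφh_space ha_space hb_space hφ_pos hback hfor
end

section
/- Let n ≥ 1, let r(s,x,t,y) ≥ 0 be measurable for 0 ≤ s ≤ t ≤ 1 and x, y ∈ ℝⁿ, let V : [0,1]×ℝⁿ → [0,∞) and Q : ℝⁿ×[0,1] → [0,∞) be measurable, and let ρ₀ : ℝⁿ → [0,∞) be measurable. Suppose measurable nonnegative functions φ₀, φ̂₀ on ℝⁿ and Λ, Λ̂ on ℝⁿ×[0,1] satisfy the Schrödinger system: (i) φ₀(x) = ∫_{ℝⁿ} r(0,x,1,y) dy + ∫_0^1 ∫_{ℝⁿ} Λ(z,t) V(t,z) r(0,x,t,z) dz dt for all x; (ii) φ₀(x) φ̂₀(x) = ρ₀(x) for a.e. x; (iii) Λ̂(z,t) = V(t,z) ∫_{ℝⁿ} r(0,x,t,z) φ̂₀(x) dx for a.e. (z,t); (iv)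 Λ(z,t) Λ̂(z,t) = Q(z,t) for a.e. (z,t). Then the couplings π*_xy(x,y) := r(0,x,1,y) φ̂₀(x) and π*_xzt(x,z,t) := Λ(z,t) V(t,z) r(0,x,t,z) φ̂₀(x) satisfy the marginal constraints: ∫_{ℝⁿ} π*_xy(x,y) dy + ∫_0^1 ∫_{ℝⁿ} π*_xzt(x,z,t) dz dt = ρ₀(x) for a.e. x, and ∫_{ℝⁿ} π*_xzt(x,z,t) dx = Q(z,t) for a.e. (z,t). -/
open MeasureTheory

/-! The factor `φ̂₀(x)` is constant in the integration variables of the first marginal and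
`Λ(z,t) V(t,z)` is constant in `x`, so the two marginals factor as `φ₀ φ̂₀` and `Λ Λ̂`; the
coupling conditions (ii) and (iv) then identify them with `ρ₀` and `Q`. -/

section

variable {α β : Type*} [MeasurableSpace α] [MeasurableSpace β]

theorem integral_add_intervalIntegral_integral_mul_const (μ : Measure α) (ν : Measure β)
    (f : α → ℝ) (g : ℝ → β → ℝ) (a b c : ℝ) :
    (∫ y, f y * c ∂μ) + (∫ t in a..b, ∫ z, g t z * c ∂ν)
      = ((∫ y, f y ∂μ) + ∫ t in a..b, ∫ z, g t z ∂ν) * c := by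
  simp only [integral_mul_const, intervalIntegral.integral_mul_const, add_mul]

theorem integral_const_mul_mul (μ : Measure α) (c : ℝ) (f g : α → ℝ) :
    ∫ x, c * f x * g x ∂μ = c * ∫ x, f x * g x ∂μ := by
  simp only [mul_assoc, integral_const_mul]

end

theorem schroedinger_system_gives_feasible_couplings_general
    (n : ℕ)
    (r : ℝ → (Fin n → ℝ) → ℝ → (Fin n → ℝ) → ℝ)
    (V : ℝ → (Fin n → ℝ) → ℝ)
    (Q : (Fin n → ℝ) × ℝ → ℝ)
    (ρ₀ : (Fin n → ℝ) → ℝ)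
    -- the restriction of Lebesgue measure on ℝⁿ × ℝ to the time window `[0,1]`:
    (mQ : Measure ((Fin n → ℝ) × ℝ))
    (φ₀ phihat0 : (Fin n → ℝ) → ℝ)
    (Λ Λhat : (Fin n → ℝ) × ℝ → ℝ)
    -- (i) the backward representation (FS1) at time 0:
    (hi : ∀ x, φ₀ x =
      (∫ y, r 0 x 1 y) + ∫ t in (0:ℝ)..1, ∫ z, Λ (z, t) * V t z * r 0 x t z)
    -- (ii) the initial coupling condition (15a):
    (hii : ∀ᵐ x ∂(volume : Measure (Fin n → ℝ)), φ₀ x * phihat0 x = ρ₀ x)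
    -- (iii) the forward representation (FS2)/(15f):
    (hiii : ∀ᵐ zt ∂mQ, Λhat zt = V zt.2 zt.1 * ∫ x, r 0 x zt.2 zt.1 * phihat0 x)
    -- (iv) the spatio-temporal coupling condition (15c):
    (hiv : ∀ᵐ zt ∂mQ, Λ zt * Λhat zt = Q zt) :
    -- conclusion: the optimal-form couplings satisfy the two marginal constraints
    (∀ᵐ x ∂(volume : Measure (Fin n → ℝ)),
      (∫ y, r 0 x 1 y * phihat0 x)
        + (∫ t in (0:ℝ)..1, ∫ z, Λ (z, t) * V t z * r 0 x t z * phihat0 x) = ρ₀ x)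
    ∧ (∀ᵐ zt ∂mQ,
        (∫ x, Λ zt * V zt.2 zt.1 * r 0 x zt.2 zt.1 * phihat0 x) = Q zt) := by
  constructor
  · filter_upwards [hii] with x hρ₀
    rw [integral_add_intervalIntegral_integral_mul_const, ← hi x, hρ₀]
  · filter_upwards [hiii, hiv] with zt hΛhat hQ
    rw [integral_const_mul_mul, mul_assoc, ← hΛhat, hQ]

/-- Any solution of the Schrödinger system (15a)-(15f) associated with the spatio-temporal
bridge problem produces couplings `π*_xy(x,y) = r(0,x,1,y) φ̂₀(x)` and
`π*_xzt(x,z,t) = Λ(z,t) V(t,z) r(0,x,t,z) φ̂₀(x)` that are feasible for Problem 2,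
i.e., match both the initial marginal `ρ₀` and the spatio-temporal killing marginal `Q`. -/
theorem schroedinger_system_gives_feasible_couplings
    (n : ℕ) (hn : 1 ≤ n)
    (r : ℝ → (Fin n → ℝ) → ℝ → (Fin n → ℝ) → ℝ)
    (hr_meas : Measurable (fun p : ℝ × (Fin n → ℝ) × ℝ × (Fin n → ℝ) =>
      r p.1 p.2.1 p.2.2.1 p.2.2.2))
    (hr_nonneg : ∀ s x t y, 0 ≤ s → s ≤ t → t ≤ 1 → 0 ≤ r s x t y)
    (V : ℝ → (Fin n → ℝ) → ℝ)
    (hV_meas : Measurable (fun p : ℝ × (Fin n → ℝ) => V p.1 p.2))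
    (hV_nonneg : ∀ t z, 0 ≤ V t z)
    (Q : (Fin n → ℝ) × ℝ → ℝ) (hQ_meas : Measurable Q) (hQ_nonneg : ∀ p, 0 ≤ Q p)
    (ρ₀ : (Fin n → ℝ) → ℝ) (hρ₀_meas : Measurable ρ₀) (hρ₀_nonneg : ∀ x, 0 ≤ ρ₀ x)
    -- the restriction of Lebesgue measure on ℝⁿ × ℝ to the time window `[0,1]`:
    (mQ : Measure ((Fin n → ℝ) × ℝ))
    (hmQ : mQ = (volume : Measure ((Fin n → ℝ) × ℝ)).restrict {p | p.2 ∈ Set.Icc (0:ℝ) 1})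
    (φ₀ phihat0 : (Fin n → ℝ) → ℝ)
    (hφ₀_meas : Measurable φ₀) (hφ₀_nonneg : ∀ x, 0 ≤ φ₀ x)
    (hphihat0_meas : Measurable phihat0) (hphihat0_nonneg : ∀ x, 0 ≤ phihat0 x)
    (Λ Λhat : (Fin n → ℝ) × ℝ → ℝ)
    (hΛ_meas : Measurable Λ) (hΛ_nonneg : ∀ p, 0 ≤ Λ p)
    (hΛhat_meas : Measurable Λhat) (hΛhat_nonneg : ∀ p, 0 ≤ Λhat p)
    -- (i) the backward representation (FS1) at time 0:
    (hi : ∀ x, φ₀ x =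
      (∫ y, r 0 x 1 y) + ∫ t in (0:ℝ)..1, ∫ z, Λ (z, t) * V t z * r 0 x t z)
    -- (ii) the initial coupling condition (15a):
    (hii : ∀ᵐ x ∂(volume : Measure (Fin n → ℝ)), φ₀ x * phihat0 x = ρ₀ x)
    -- (iii) the forward representation (FS2)/(15f):
    (hiii : ∀ᵐ zt ∂mQ, Λhat zt = V zt.2 zt.1 * ∫ x, r 0 x zt.2 zt.1 * phihat0 x)
    -- (iv) the spatio-temporal coupling condition (15c):
    (hiv : ∀ᵐ zt ∂mQ, Λ zt * Λhat zt = Q zt) :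
    -- conclusion: the optimal-form couplings satisfy the two marginal constraints
    (∀ᵐ x ∂(volume : Measure (Fin n → ℝ)),
      (∫ y, r 0 x 1 y * phihat0 x)
        + (∫ t in (0:ℝ)..1, ∫ z, Λ (z, t) * V t z * r 0 x t z * phihat0 x) = ρ₀ x)
    ∧ (∀ᵐ zt ∂mQ,
        (∫ x, Λ zt * V zt.2 zt.1 * r 0 x zt.2 zt.1 * phihat0 x) = Q zt) :=
  schroedinger_system_gives_feasible_couplings_general n r V Q ρ₀ mQ φ₀ phihat0 Λ Λhat hi hii hiii
    hiv
end
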